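/- For 0 ≤ k ≤ (n+1)/2, T_{n+2}^k(x,s,q) = x U_{n+1}^k(x, q²s, q) + q s U_n^{k-1}(x, q²s, q); that is, the incomplete q-Chebyshev polynomial of the first kind equals x times the incomplete second-kind polynomial with parameter q²s, plus qs times the one-step-lower second-kind polynomial with parameter q²s. -/

import Mathlib

/-- q-integer [n]_q = (1-q^n)/(1-q). -/
noncomputable def qint (q : ℂ) (n : ℕ) : ℂ := (1 - q ^ n) / (1 - q)

/-- q-factorial [n]_q!. -/
noncomputable def qfact (q : ℂ) (n : ℕ) : ℂ := ∏ i ∈ Finset.range n, qint q (i + 1)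

/-- Gaussian (q-binomial) coefficient, 0 for k > n. -/
noncomputable def qbinom (q : ℂ) (n k : ℕ) : ℂ :=
  if k ≤ n then qfact q n / (qfact q (n - k) * qfact q k) else 0

/-- q-shifted factorial (x;q)_n. -/
noncomputable def qpoch (x q : ℂ) (n : ℕ) : ℂ := ∏ i ∈ Finset.range n, (1 - q ^ i * x)

/-- Partial sum defining incomplete q-Chebyshev polynomials of the second kind:
`Usum x s q n (k+1)` is U_n^k(x,s,q), and `Usum x s q n 0 = 0` is the empty sum (k = -1). -/
noncomputable def Usum (x s q : ℂ) (n m : ℕ) : ℂ :=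
  ∑ j ∈ Finset.range m,
    q ^ (j ^ 2) * qbinom q (n - j) j * (qpoch (-q) q (n - j) / qpoch (-q) q j) *
      s ^ j * x ^ (n - 2 * j)

/-- Partial sum defining incomplete q-Chebyshev polynomials of the first kind:
`Tsum x s q n (k+1)` is T_n^k(x,s,q). -/
noncomputable def Tsum (x s q : ℂ) (n m : ℕ) : ℂ :=
  ∑ j ∈ Finset.range m,
    q ^ (j ^ 2) * (qint q n / qint q (n - j)) * qbinom q (n - j) j *
      (qpoch (-q) q (n - j - 1) / qpoch (-q) q j) * s ^ j * x ^ (n - 2 * j)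

/-!
Compare the sums term by term: the `j`-th term of `T_{n+2}(x, s)` is `x` times the `j`-th term
of `U_{n+1}(x, q²s)` plus `qs` times the `(j-1)`-th term of `U_n(x, q²s)`. After cancelling the
common factors this is the q-binomial identity
`[m]/[m-j] · [m-j choose j] = q^{2j} [m-1-j choose j] + (1 + q^j) [m-1-j choose j-1]`,
which, after clearing q-factorials, reduces to `[m] = [2j] + q^{2j} [m-2j]` and
`[2j] = (1 + q^j) [j]`.
All the q-integers and `(-q;q)_n` that get cancelled are nonzero as soon as `q` is not a root of
unity, in particular for `‖q‖ < 1`.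
-/

open Finset

lemma qint_add (q : ℂ) (m n : ℕ) : qint q (m + n) = qint q m + q ^ m * qint q n := by
  simp only [qint]
  ring

lemma qint_two_mul (q : ℂ) (m : ℕ) : qint q (2 * m) = (1 + q ^ m) * qint q m := by
  simp only [qint]
  ring

lemma qfact_succ (q : ℂ) (m : ℕ) : qfact q (m + 1) = qfact q m * qint q (m + 1) :=
  prod_range_succ _ _

lemma qpoch_neg_self_succ (q : ℂ) (m : ℕ) :
    qpoch (-q) q (m + 1) = qpoch (-q) q m * (1 + q ^ (m + 1)) := by
  rw [qpoch, qpoch, prod_range_succ]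
  ring

lemma qbinom_add (q : ℂ) (m k : ℕ) :
    qbinom q (m + k) k = qfact q (m + k) / (qfact q m * qfact q k) := by
  rw [qbinom, if_pos (Nat.le_add_left k m), Nat.add_sub_cancel]

noncomputable def Uterm (x s q : ℂ) (n j : ℕ) : ℂ :=
  q ^ (j ^ 2) * qbinom q (n - j) j * (qpoch (-q) q (n - j) / qpoch (-q) q j) *
    s ^ j * x ^ (n - 2 * j)

noncomputable def Tterm (x s q : ℂ) (n j : ℕ) : ℂ :=
  q ^ (j ^ 2) * (qint q n / qint q (n - j)) * qbinom q (n - j) j *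
    (qpoch (-q) q (n - j - 1) / qpoch (-q) q j) * s ^ j * x ^ (n - 2 * j)

lemma Usum_eq_sum_Uterm (x s q : ℂ) (n m : ℕ) :
    Usum x s q n m = ∑ j ∈ range m, Uterm x s q n j := rfl

lemma Tsum_eq_sum_Tterm (x s q : ℂ) (n m : ℕ) :
    Tsum x s q n m = ∑ j ∈ range m, Tterm x s q n j := rfl

section NotRootOfUnity

variable {q : ℂ}

lemma pow_ne_one_of_not_isOfFinOrder (hq : ¬IsOfFinOrder q) {m : ℕ} (hm : m ≠ 0) :
    q ^ m ≠ 1 :=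
  fun h ↦ hq (isOfFinOrder_iff_pow_eq_one.2 ⟨m, Nat.pos_of_ne_zero hm, h⟩)

lemma qint_ne_zero (hq : ¬IsOfFinOrder q) {m : ℕ} (hm : m ≠ 0) : qint q m ≠ 0 := by
  have hq_ne_one : q ≠ 1 := by simpa using pow_ne_one_of_not_isOfFinOrder hq one_ne_zero
  exact div_ne_zero (sub_ne_zero.2 (pow_ne_one_of_not_isOfFinOrder hq hm).symm)
    (sub_ne_zero.2 hq_ne_one.symm)

lemma qfact_ne_zero (hq : ¬IsOfFinOrder q) (m : ℕ) : qfact q m ≠ 0 :=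
  prod_ne_zero_iff.2 fun i _ ↦ qint_ne_zero hq i.succ_ne_zero

lemma one_add_pow_ne_zero (hq : ¬IsOfFinOrder q) {m : ℕ} (hm : m ≠ 0) : 1 + q ^ m ≠ 0 := by
  intro h
  apply pow_ne_one_of_not_isOfFinOrder hq (mul_ne_zero two_ne_zero hm)
  rw [pow_mul', eq_neg_of_add_eq_zero_right h, neg_one_sq]

lemma qpoch_neg_self_ne_zero (hq : ¬IsOfFinOrder q) (m : ℕ) : qpoch (-q) q m ≠ 0 := by
  induction m with
  | zero => simp [qpoch]
  | succ m ih =>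
    rw [qpoch_neg_self_succ]
    exact mul_ne_zero ih (one_add_pow_ne_zero hq m.succ_ne_zero)

lemma qbinom_zero (hq : ¬IsOfFinOrder q) (m : ℕ) : qbinom q m 0 = 1 := by
  rw [← add_zero m, qbinom_add, add_zero, show qfact q 0 = 1 from prod_range_zero _, mul_one,
    div_self (qfact_ne_zero hq m)]

-- The identity of the header with `j + 1` in place of `j` and `m = 2 (j + 1) + (a + 1)`.
lemma qint_div_mul_qbinom (hq : ¬IsOfFinOrder q) (j a : ℕ) :
    qint q (2 * (j + 1) + (a + 1)) / qint q (a + 1 + (j + 1)) *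
        qbinom q (a + 1 + (j + 1)) (j + 1) =
      q ^ (2 * (j + 1)) * qbinom q (a + (j + 1)) (j + 1) +
        (1 + q ^ (j + 1)) * qbinom q (a + 1 + j) j := by
  have hN := qint_ne_zero hq (m := a + (j + 1) + 1) (by omega)
  have ha := qint_ne_zero hq (m := a + 1) (by omega)
  have hj := qint_ne_zero hq (m := j + 1) (by omega)
  have hfa := qfact_ne_zero hq a
  have hfj := qfact_ne_zero hq j
  rw [qbinom_add, qbinom_add, qbinom_add, qint_add, qint_two_mul, qfact_succ q a, qfact_succ q j,
    show a + 1 + (j + 1) = a + (j + 1) + 1 by omega, qfact_succ q (a + (j + 1)),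
    show a + 1 + j = a + (j + 1) by omega]
  field_simp
  ring

lemma Tterm_zero (hq : ¬IsOfFinOrder q) (x s s' : ℂ) (n : ℕ) :
    Tterm x s q (n + 1) 0 = x * Uterm x s' q n 0 := by
  have hn := qint_ne_zero hq n.succ_ne_zero
  simp [Tterm, Uterm, qbinom_zero hq, hn, qpoch, pow_succ]
  ring

lemma Tterm_succ (hq : ¬IsOfFinOrder q) (x s : ℂ) {n j : ℕ} (h : 2 * j + 1 ≤ n) :
    Tterm x s q (n + 2) (j + 1) =
      x * Uterm x (q ^ 2 * s) q (n + 1) (j + 1) + q * s * Uterm x (q ^ 2 * s) q n j := by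
  obtain ⟨a, rfl⟩ := Nat.exists_eq_add_of_le h
  have hcoef := qint_div_mul_qbinom hq j a
  rw [show a + 1 + j = a + (j + 1) by omega] at hcoef
  have hj := qpoch_neg_self_ne_zero hq j
  have hN := qpoch_neg_self_ne_zero hq (a + (j + 1))
  have hw := one_add_pow_ne_zero hq (m := j + 1) (by omega)
  simp only [Tterm, Uterm, qpoch_neg_self_succ,
    show 2 * j + 1 + a + 2 = 2 * (j + 1) + (a + 1) by omega,
    show 2 * (j + 1) + (a + 1) - (j + 1) = a + 1 + (j + 1) by omega,
    show a + 1 + (j + 1) - 1 = a + (j + 1) by omega,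
    show 2 * (j + 1) + (a + 1) - 2 * (j + 1) = a + 1 by omega,
    show 2 * j + 1 + a + 1 - (j + 1) = a + (j + 1) by omega,
    show 2 * j + 1 + a + 1 - 2 * (j + 1) = a by omega,
    show 2 * j + 1 + a - j = a + (j + 1) by omega,
    show 2 * j + 1 + a - 2 * j = a + 1 by omega]
  linear_combination (norm := skip) (q ^ (j + 1) ^ 2 * (qpoch (-q) q (a + (j + 1)) /
    (qpoch (-q) q j * (1 + q ^ (j + 1)))) * s ^ (j + 1) * x ^ (a + 1)) * hcoef
  field_simp
  ring

end NotRootOfUnity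

theorem Tinc_eq_Uinc_qsq_general (q : ℂ) (hq1 : ‖q‖ < 1)
    (x s : ℂ) (n k : ℕ) (hk : 2 * k ≤ n + 1) :
    Tsum x s q (n + 2) (k + 1) =
      x * Usum x (q ^ 2 * s) q (n + 1) (k + 1) + q * s * Usum x (q ^ 2 * s) q n k := by
  have hq : ¬IsOfFinOrder q := fun h ↦ hq1.ne h.norm_eq_one
  have hsucc : ∀ j ∈ range k, Tterm x s q (n + 2) (j + 1) =
      x * Uterm x (q ^ 2 * s) q (n + 1) (j + 1) + q * s * Uterm x (q ^ 2 * s) q n j :=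
    fun j hj ↦ Tterm_succ hq x s (by have := mem_range.1 hj; omega)
  rw [Tsum_eq_sum_Tterm, Usum_eq_sum_Uterm, Usum_eq_sum_Uterm, sum_range_succ', sum_range_succ',
    sum_congr rfl hsucc, sum_add_distrib, Tterm_zero hq x s (q ^ 2 * s), mul_add, mul_sum, mul_sum]
  ring

theorem Tinc_eq_Uinc_qsq (q : ℂ) (hq0 : 0 < ‖q‖) (hq1 : ‖q‖ < 1)
    (x s : ℂ) (n k : ℕ) (hk : 2 * k ≤ n + 1) :
    Tsum x s q (n + 2) (k + 1) =
      x * Usum x (q ^ 2 * s) q (n + 1) (k + 1) + q * s * Usum x (q ^ 2 * s) q n k :=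
  Tinc_eq_Uinc_qsq_general q hq1 x s n k hk
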